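/- Let T be an order tree, R a ray of T, and t ∈ R a tail node of R. Then every ray R' of T containing t satisfies R ⊆ R'. -/

import Mathlib

/-!
Above `t`, the ray `R` is an `ω`-sequence `t < u₀ < u₁ < ⋯` in which every term is an immediate
successor of the previous one. A ray through a node contains some immediate successor of it (take
a minimal element above it, by well-foundedness), and since none of `t, u₀, u₁, …` branches, a ray
through `t` is forced to contain every `uₙ`; being down-closed, it also contains `R ∩ ↓t`.
-/

def IsOrderTree (α : Type*) [PartialOrder α] : Prop :=
  (∃ r : α, ∀ t, r ≤ t) ∧ ∀ t : α, IsWellOrder {s : α // s ≤ t} (· < ·)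

def IsPath {α : Type*} [PartialOrder α] (P : Set α) : Prop :=
  IsLowerSet P ∧ IsChain (· ≤ ·) P

def IsRay {α : Type*} [PartialOrder α] (R : Set α) : Prop :=
  IsPath R ∧ R.Nonempty ∧ ∀ t ∈ R, ∃ s ∈ R, t < s

def IsSuccOf {α : Type*} [PartialOrder α] (s t : α) : Prop :=
  t < s ∧ ∀ u, t < u → ¬ u < s

def IsBranching {α : Type*} [PartialOrder α] (t : α) : Prop :=
  ∃ s₁ s₂, IsSuccOf s₁ t ∧ IsSuccOf s₂ t ∧ s₁ ≠ s₂

def HasOrderTypeOmega {α : Type*} [PartialOrder α] (S : Set α) : Prop :=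
  Nonempty (S ≃o ℕ)

def IsTailNode {α : Type*} [PartialOrder α] (R : Set α) (t : α) : Prop :=
  t ∈ R ∧ HasOrderTypeOmega (R \ {s | s ≤ t}) ∧
    ∀ u ∈ (R \ {s | s ≤ t}) ∪ {t}, ¬ IsBranching u

noncomputable def nodeHeight {α : Type*} [PartialOrder α] (t : α)
    [IsWellOrder {s : α // s < t} (· < ·)] : Ordinal :=
  Ordinal.type ((· < ·) : {s : α // s < t} → {s : α // s < t} → Prop)

section

variable {α : Type*} [PartialOrder α]

theorem IsOrderTree.wellFoundedLT (hT : IsOrderTree α) : WellFoundedLT α := by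
  refine ⟨⟨fun a => ?_⟩⟩
  have := hT.2 a
  suffices ∀ b : {s : α // s ≤ a}, Acc (· < ·) b.1 from this ⟨a, le_rfl⟩
  intro b
  induction b using WellFoundedLT.induction with
  | _ b ih => exact ⟨_, fun c hcb => ih ⟨c, hcb.le.trans b.2⟩ hcb⟩

section Successors

variable [WellFoundedLT α] {P : Set α} {x y : α}

theorem IsRay.exists_isSuccOf (hP : IsRay P) (hx : x ∈ P) : ∃ y ∈ P, IsSuccOf y x := by
  obtain ⟨m, ⟨hmP, hxm⟩, hmin⟩ := wellFounded_lt.has_min {y | y ∈ P ∧ x < y} (hP.2.2 x hx)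
  exact ⟨m, hmP, hxm, fun u hxu hum => hmin u ⟨hP.1.1 hum.le hmP, hxu⟩ hum⟩

theorem IsRay.mem_of_isSuccOf (hP : IsRay P) (hx : x ∈ P) (hnb : ¬ IsBranching x)
    (hy : IsSuccOf y x) : y ∈ P := by
  obtain ⟨y', hy'P, hy'⟩ := hP.exists_isSuccOf hx
  by_contra hyP
  exact hnb ⟨y, y', hy, hy', fun h => hyP (h ▸ hy'P)⟩

end Successors

section Tail

variable {R : Set α} {t : α}

theorem IsPath.lt_of_mem_tail (hR : IsPath R) (ht : t ∈ R) {s : α}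
    (hs : s ∈ R \ {s | s ≤ t}) : t < s :=
  ((hR.2.total ht hs.1).resolve_right hs.2).lt_of_not_ge hs.2

theorem IsPath.mem_tail_of_lt_of_le (hR : IsPath R) {s w : α} (hs : s ∈ R \ {s | s ≤ t})
    (htw : t < w) (hws : w ≤ s) : w ∈ R \ {s | s ≤ t} :=
  ⟨hR.1 hws hs.1, htw.not_ge⟩

theorem IsPath.isSuccOf_tail_symm_zero (hR : IsPath R) (ht : t ∈ R)
    (e : ↥(R \ {s | s ≤ t}) ≃o ℕ) : IsSuccOf (e.symm 0 : α) t := by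
  refine ⟨hR.lt_of_mem_tail ht (e.symm 0).2, fun w htw hw => ?_⟩
  have hwS := hR.mem_tail_of_lt_of_le (e.symm 0).2 htw hw.le
  exact Nat.not_lt_zero _ ((e.lt_symm_apply (x := ⟨w, hwS⟩)).1 hw)

theorem IsPath.isSuccOf_tail_symm_succ (hR : IsPath R) (ht : t ∈ R)
    (e : ↥(R \ {s | s ≤ t}) ≃o ℕ) (n : ℕ) : IsSuccOf (e.symm (n + 1) : α) (e.symm n) := by
  refine ⟨e.symm.strictMono n.lt_succ_self, fun w hnw hw => ?_⟩
  have hwS := hR.mem_tail_of_lt_of_le (e.symm (n + 1)).2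
    ((hR.lt_of_mem_tail ht (e.symm n).2).trans hnw) hw.le
  have h₁ : n < e ⟨w, hwS⟩ := (e.symm_apply_lt (x := ⟨w, hwS⟩)).1 hnw
  have h₂ : e ⟨w, hwS⟩ < n + 1 := (e.lt_symm_apply (x := ⟨w, hwS⟩)).1 hw
  omega

end Tail

end

/-- any ray containing a tail node `t` of `R` contains all of `R`. -/
theorem stmt2 {α : Type*} [PartialOrder α] (hT : IsOrderTree α) (R : Set α)
    (hR : IsRay R) (t : α) (ht : IsTailNode R t) :
    ∀ R' : Set α, IsRay R' → t ∈ R' → R ⊆ R' := by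
  intro R' hR' htR'
  have := hT.wellFoundedLT
  obtain ⟨htR, ⟨e⟩, hnb⟩ := ht
  have hmem : ∀ n, (e.symm n : α) ∈ R' := by
    intro n
    induction n with
    | zero =>
      exact hR'.mem_of_isSuccOf htR' (hnb t (Or.inr rfl)) (hR.1.isSuccOf_tail_symm_zero htR e)
    | succ n ih =>
      exact hR'.mem_of_isSuccOf ih (hnb _ (Or.inl (e.symm n).2))
        (hR.1.isSuccOf_tail_symm_succ htR e n)
  intro s hs
  by_cases hst : s ≤ t
  · exact hR'.1.1 hst htR'
  · simpa using hmem (e ⟨s, hs, hst⟩)
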